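/- arXiv:1606.03950 — 6 statements merged into one kernel-verified Lean document; each statement's English description precedes it below -/
import Mathlib

section
/- For every real y > 0, Σ_{n=1}^∞ 1/(n² + y²) = -1/(2y²) + (π/(2y))·coth(πy). -/
/-!
Evaluate the Mittag-Leffler expansion `π cot (π z) = 1/z + ∑ₙ (1/(z - n) + 1/(z + n))` at the
purely imaginary point `z = y i`: there `cot (π y i) = -i coth (π y)` and each pair of terms
collapses to `-2 y i / (n² + y²)`.
-/

open Real

namespace Complex

lemma mem_integerComplement_of_im_ne_zero {z : ℂ} (hz : z.im ≠ 0) : z ∈ integerComplement :=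
  fun ⟨n, hn⟩ ↦ hz (by simp [← hn])

lemma cot_mul_I (z : ℂ) : cot (z * I) = -I * (cosh z / sinh z) := by
  rw [cot_eq_cos_div_sin, cos_mul_I, sin_mul_I]
  field_simp
  rw [I_sq]
  ring

lemma one_div_mul_I_sub_add_one_div_mul_I_add (y x : ℝ) (hy : y ≠ 0) :
    1 / (y * I - x) + 1 / (y * I + x) = -2 * y * I * ((1 / (x ^ 2 + y ^ 2) : ℝ) : ℂ) := by
  have hsub : (y : ℂ) * I - x ≠ 0 := fun h ↦ hy (by simpa using congrArg im h)
  have hadd : (y : ℂ) * I + x ≠ 0 := fun h ↦ hy (by simpa using congrArg im h)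
  have hsq : (x : ℂ) ^ 2 + y ^ 2 ≠ 0 := by exact_mod_cast (by positivity : x ^ 2 + y ^ 2 ≠ 0)
  push_cast
  field_simp
  linear_combination 2 * y ^ 3 * I * I_sq

end Complex

open Complex in
theorem Real.pi_mul_coth_pi_mul {y : ℝ} (hy : y ≠ 0) :
    π * (cosh (π * y) / sinh (π * y)) = 1 / y + 2 * y * ∑' n : ℕ+, 1 / ((n : ℝ) ^ 2 + y ^ 2) := by
  have h := cot_series_rep (mem_integerComplement_of_im_ne_zero (z := y * I) (by simpa using hy))
  simp_rw [← ofReal_natCast, one_div_mul_I_sub_add_one_div_mul_I_add y _ hy, tsum_mul_left,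
    ← ofReal_tsum, ← mul_assoc, cot_mul_I] at h
  set S := ∑' n : ℕ+, 1 / ((n : ℝ) ^ 2 + y ^ 2)
  have hyc : (y : ℂ) ≠ 0 := by exact_mod_cast hy
  have hsinh : Complex.sinh (π * y) ≠ 0 := by
    exact_mod_cast Real.sinh_ne_zero.mpr (mul_ne_zero pi_ne_zero hy)
  apply ofReal_injective
  push_cast [ofReal_cosh, ofReal_sinh]
  field_simp at h ⊢
  rw [I_sq] at h
  linear_combination h

theorem sum_inv_sq_add_sq (y : ℝ) (hy : 0 < y) :
    ∑' n : ℕ+, 1 / ((n : ℝ) ^ 2 + y ^ 2) =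
      -1 / (2 * y ^ 2) + (π / (2 * y)) * (Real.cosh (π * y) / Real.sinh (π * y)) := by
  have h := pi_mul_coth_pi_mul hy.ne'
  field_simp at h ⊢
  linear_combination -h
end

section
/- For every real y > 0, Σ_{n=1}^∞ 1/((2n-1)² + y²) = (π/(4y))·tanh(πy/2). -/
/-!
Evaluating the Mittag-Leffler expansion `π cot (π x) = 1/x + ∑ₙ (1/(x - n) + 1/(x + n))`
at the imaginary point `x = y i` gives
`∑_{n ≥ 0} 1/(n² + y²) = 1/(2y²) + (π/(2y)) coth (π y)`.
The odd terms are this sum minus a quarter of the same sum at `y/2`, and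
`coth (2t) = (coth t + tanh t)/2` turns the difference into `tanh`.
-/

open Real

theorem Real.inv_tanh_two_mul (t : ℝ) : (tanh (2 * t))⁻¹ = ((tanh t)⁻¹ + tanh t) / 2 := by
  rcases eq_or_ne t 0 with rfl | ht
  · simp
  have hs : sinh t ≠ 0 := sinh_ne_zero.mpr ht
  have hc : cosh t ≠ 0 := (cosh_pos t).ne'
  rw [tanh_eq_sinh_div_cosh, tanh_eq_sinh_div_cosh, sinh_two_mul, cosh_two_mul]
  field_simp

theorem summable_one_div_sq_add_sq (y : ℝ) :
    Summable fun n : ℕ => 1 / ((n : ℝ) ^ 2 + y ^ 2) := by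
  rw [← summable_nat_add_iff 1]
  refine Summable.of_nonneg_of_le (fun n => by positivity) (fun n => ?_)
    ((summable_nat_add_iff 1).mpr (Real.summable_one_div_nat_pow.mpr one_lt_two))
  gcongr
  exact le_add_of_nonneg_right (sq_nonneg y)

theorem tsum_pnat_one_div_sq_add_sq {y : ℝ} (hy : y ≠ 0) :
    ∑' n : ℕ+, 1 / ((n : ℝ) ^ 2 + y ^ 2) =
      π / (2 * y) * (tanh (π * y))⁻¹ - 1 / (2 * y ^ 2) := by
  open Complex in
  have hx : (y * I : ℂ) ∈ integerComplement := by
    rintro ⟨n, hn⟩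
    exact hy (by simpa using (congrArg im hn).symm)
  have hterm (n : ℕ+) : 1 / ((y * I : ℂ) - n) + 1 / (y * I + n) =
      ((-2 * y * (1 / ((n : ℝ) ^ 2 + y ^ 2)) : ℝ) : ℂ) * I := by
    have h₁ : (y * I : ℂ) - n ≠ 0 := by
      simpa [sub_eq_add_neg] using integerComplement_add_ne_zero hx (-n)
    have h₂ : (y * I : ℂ) + n ≠ 0 := by simpa using integerComplement_add_ne_zero hx n
    have h₃ : (n : ℂ) ^ 2 + (y : ℂ) ^ 2 ≠ 0 := by
      exact_mod_cast (by positivity : ((n : ℕ) : ℝ) ^ 2 + y ^ 2 ≠ 0)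
    push_cast
    field_simp
    linear_combination (2 * (y : ℂ) ^ 3 * I) * I_sq
  have h := cot_series_rep hx
  simp_rw [hterm] at h
  rw [tsum_mul_right, ← ofReal_tsum, tsum_mul_left,
    show (π : ℂ) * (y * I) = (π * y : ℝ) * I by push_cast; ring, Complex.cot_eq_cos_div_sin,
    cos_mul_I, sin_mul_I, ← ofReal_cosh, ← ofReal_sinh] at h
  set S := ∑' n : ℕ+, 1 / ((n : ℝ) ^ 2 + y ^ 2)
  have hsinh : Real.sinh (π * y) ≠ 0 := by simpa using And.intro pi_ne_zero hy
  have hcoth : π * Real.cosh (π * y) / Real.sinh (π * y) = 1 / y + 2 * y * S := by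
    apply ofReal_injective
    have hy' : (y : ℂ) ≠ 0 := by exact_mod_cast hy
    push_cast at h ⊢
    field_simp at h ⊢
    linear_combination h - 2 * (y : ℂ) ^ 2 * S * I_sq
  rw [Real.tanh_eq_sinh_div_cosh, inv_div]
  field_simp at hcoth ⊢
  linear_combination -hcoth

theorem tsum_one_div_sq_add_sq {y : ℝ} (hy : y ≠ 0) :
    ∑' n : ℕ, 1 / ((n : ℝ) ^ 2 + y ^ 2) =
      π / (2 * y) * (tanh (π * y))⁻¹ + 1 / (2 * y ^ 2) := by
  rw [(summable_one_div_sq_add_sq y).tsum_eq_zero_add, ← tsum_pnat_eq_tsum_succ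
    (f := fun n : ℕ => 1 / ((n : ℝ) ^ 2 + y ^ 2)), tsum_pnat_one_div_sq_add_sq hy]
  field_simp
  ring

theorem tsum_one_div_odd_sq_add_sq {y : ℝ} (hy : y ≠ 0) :
    ∑' k : ℕ, 1 / ((2 * k + 1 : ℝ) ^ 2 + y ^ 2) = π / (4 * y) * tanh (π * y / 2) := by
  have hsum := summable_one_div_sq_add_sq y
  have heven : ∑' k : ℕ, 1 / (((2 * k : ℕ) : ℝ) ^ 2 + y ^ 2) =
      1 / 4 * ∑' k : ℕ, 1 / ((k : ℝ) ^ 2 + (y / 2) ^ 2) := by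
    rw [← tsum_mul_left]
    refine tsum_congr fun k => ?_
    push_cast
    field_simp
    ring
  have hsplit := tsum_even_add_odd (f := fun n : ℕ => 1 / ((n : ℝ) ^ 2 + y ^ 2))
    (hsum.comp_injective (mul_right_injective₀ two_ne_zero))
    (hsum.comp_injective fun a b h => by simpa using h)
  have hdouble := inv_tanh_two_mul (π * y / 2)
  rw [mul_div_cancel₀ _ two_ne_zero] at hdouble
  rw [heven, tsum_one_div_sq_add_sq hy, tsum_one_div_sq_add_sq (div_ne_zero hy two_ne_zero),
    hdouble, ← mul_div_assoc π y] at hsplit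
  push_cast at hsplit
  rw [eq_sub_of_add_eq' hsplit]
  ring

theorem sum_inv_odd_sq_add_sq (y : ℝ) (hy : 0 < y) :
    ∑' n : ℕ+, 1 / ((2 * (n : ℝ) - 1) ^ 2 + y ^ 2) =
      (π / (4 * y)) * Real.tanh (π * y / 2) := by
  rw [tsum_pnat_eq_tsum_succ (f := fun n : ℕ => 1 / ((2 * (n : ℝ) - 1) ^ 2 + y ^ 2)),
    ← tsum_one_div_odd_sq_add_sq hy.ne']
  refine tsum_congr fun n => ?_
  push_cast
  ring
end

section
/- For every real y > 0, Σ_{n=1}^∞ 1/((2n)² + y²) = -1/(2y²) + (π/(4y))·coth(πy/2). -/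
/-!
Evaluate the Mittag-Leffler expansion `π cot (π x) = 1/x + ∑ₙ (1/(x - n) + 1/(x + n))` at the
imaginary point `x = a i`: there `cot` turns into `-i coth`, each pair of terms into
`-2ai / (n² + a²)`, and solving for the sum gives `∑ 1/(n² + a²) = π coth(πa)/(2a) - 1/(2a²)`.
The even-square sum is the case `a = y/2`, scaled by `1/4`.
-/

open Real

open Complex in
theorem Complex.cot_mul_I_s10 (z : ℂ) : cot (z * I) = -I * (cosh z / sinh z) := by
  rw [cot_eq_cos_div_sin, cos_mul_I, sin_mul_I]
  field_simp
  rw [I_sq]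
  ring

open Complex in
theorem Complex.ofReal_mul_I_mem_integerComplement {a : ℝ} (ha : a ≠ 0) :
    (a : ℂ) * I ∈ integerComplement := by
  rintro ⟨n, hn⟩
  exact ha (by simpa [eq_comm] using congrArg im hn)

open Complex in
theorem Complex.one_div_ofReal_mul_I_sub_add (a x : ℝ) (h : x ^ 2 + a ^ 2 ≠ 0) :
    1 / ((a : ℂ) * I - x) + 1 / (a * I + x) = -2 * a * I * ((1 / (x ^ 2 + a ^ 2) : ℝ) : ℂ) := by
  have hprod : ((a : ℂ) * I - x) * (a * I + x) = -((x ^ 2 + a ^ 2 : ℝ) : ℂ) := by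
    push_cast
    linear_combination (a : ℂ) ^ 2 * I_sq
  obtain ⟨h₁, h₂⟩ := mul_ne_zero_iff.1 (hprod ▸ neg_ne_zero.2 (ofReal_ne_zero.2 h))
  rw [div_add_div _ _ h₁ h₂, hprod]
  push_cast
  field_simp
  ring

theorem Real.tsum_inv_sq_add_sq {a : ℝ} (ha : a ≠ 0) :
    ∑' n : ℕ+, 1 / ((n : ℝ) ^ 2 + a ^ 2) =
      π / (2 * a) * (cosh (π * a) / sinh (π * a)) - 1 / (2 * a ^ 2) := by
  have hrep := cot_series_rep (Complex.ofReal_mul_I_mem_integerComplement ha)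
  have hterm (n : ℕ+) := Complex.one_div_ofReal_mul_I_sub_add a n (by positivity)
  simp only [Complex.ofReal_natCast] at hterm
  rw [tsum_congr hterm, tsum_mul_left, ← Complex.ofReal_tsum, ← mul_assoc,
    Complex.cot_mul_I_s10] at hrep
  have hs : Complex.sinh (π * a) ≠ 0 := by
    exact_mod_cast sinh_ne_zero.2 (mul_ne_zero pi_ne_zero ha)
  have ha' : (a : ℂ) ≠ 0 := Complex.ofReal_ne_zero.2 ha
  set S := ∑' n : ℕ+, 1 / ((n : ℝ) ^ 2 + a ^ 2)
  apply Complex.ofReal_injective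
  push_cast
  field_simp at hrep ⊢
  rw [Complex.I_sq] at hrep
  linear_combination -hrep

theorem sum_inv_even_sq_add_sq (y : ℝ) (hy : 0 < y) :
    ∑' n : ℕ+, 1 / ((2 * (n : ℝ)) ^ 2 + y ^ 2) =
      -1 / (2 * y ^ 2) + (π / (4 * y)) * (Real.cosh (π * y / 2) / Real.sinh (π * y / 2)) := by
  have hterm (n : ℕ+) :
      1 / ((2 * (n : ℝ)) ^ 2 + y ^ 2) = 1 / 4 * (1 / ((n : ℝ) ^ 2 + (y / 2) ^ 2)) := by
    field_simp
    ring
  rw [tsum_congr hterm, tsum_mul_left, tsum_inv_sq_add_sq (by positivity), ← mul_div_assoc]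
  field_simp
  ring
end

section
/- For every real x with 0 < x ≤ 1/2 and every real y ≥ 8, the quantity (1/2)(log π + γ + x/(x²+y²) + (1-x)/((1-x)²+y²) + Σ_{n=1}^∞ ((2n+x)/((2n+x)²+y²) - 1/(2n)) + Σ_{n=1}^∞ ((2n+1-x)/((2n+1-x)²+y²) - 1/(2n))) is strictly negative. -/
/-!
Every term `a / (a ^ 2 + y ^ 2) - 1 / (2 * n)` of the two series has `2n ≤ a ≤ 2n + 1`, so it is
nonpositive and of size `O(1 / n ^ 2)`; each series is therefore at most the sum of its first seven
terms. For `y ≥ 8` these are bounded through `t ↦ t / (t ^ 2 + 64)`, which increases up to `t = 8`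
and decreases after, so each series is below `-9/10`. The remaining terms are at most `1/64` in
total, and `log π + γ < 1.15 + 0.6083`.
-/

open Real

section Rational

variable {s t a y c : ℝ}

lemma div_sq_add_le_div_sq_add_of_mul_le (hc : 0 < c) (hst : s ≤ t) (h : s * t ≤ c) :
    s / (s ^ 2 + c) ≤ t / (t ^ 2 + c) := by
  rw [div_le_div_iff₀ (by positivity) (by positivity)]
  nlinarith [mul_nonneg (sub_nonneg.2 hst) (sub_nonneg.2 h)]

lemma div_sq_add_le_div_sq_add_of_le_mul (hc : 0 < c) (hst : s ≤ t) (h : c ≤ s * t) :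
    t / (t ^ 2 + c) ≤ s / (s ^ 2 + c) := by
  rw [div_le_div_iff₀ (by positivity) (by positivity)]
  nlinarith [mul_nonneg (sub_nonneg.2 hst) (sub_nonneg.2 h)]

/-- `t ↦ t / (t ^ 2 + c)` is unimodal with its peak at `√c`, so on an interval not containing
`√c` in its interior it is bounded by its value at one of the ends. -/
lemma div_sq_add_sq_le_max (hc : 0 < c) (hcy : c ≤ y ^ 2) (hs : 0 ≤ s) (ha : a ∈ Set.Icc s t)
    (hst : t ^ 2 ≤ c ∨ c ≤ s ^ 2) :
    a / (a ^ 2 + y ^ 2) ≤ max (s / (s ^ 2 + c)) (t / (t ^ 2 + c)) := by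
  obtain ⟨hsa, hat⟩ := ha
  have ha0 : 0 ≤ a := hs.trans hsa
  have hyc : a / (a ^ 2 + y ^ 2) ≤ a / (a ^ 2 + c) :=
    div_le_div_of_nonneg_left ha0 (by positivity) (by linarith)
  rcases hst with ht | hs'
  · have := div_sq_add_le_div_sq_add_of_mul_le hc hat (by nlinarith)
    exact (hyc.trans this).trans (le_max_right _ _)
  · have := div_sq_add_le_div_sq_add_of_le_mul hc hsa (by nlinarith)
    exact (hyc.trans this).trans (le_max_left _ _)

lemma div_sq_add_sq_le_max_of_mem_Icc_two_mul (n : ℕ) (ha : a ∈ Set.Icc (2 * (n : ℝ)) (2 * n + 1))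
    (hy : 64 ≤ y ^ 2) :
    a / (a ^ 2 + y ^ 2) ≤
      max (2 * (n : ℝ) / ((2 * n) ^ 2 + 64)) ((2 * (n : ℝ) + 1) / ((2 * n + 1) ^ 2 + 64)) := by
  refine div_sq_add_sq_le_max (by norm_num) hy (by positivity) ha ?_
  rcases Nat.lt_or_ge n 4 with hn | hn
  · have : (n : ℝ) ≤ 3 := by exact_mod_cast Nat.le_of_lt_succ hn
    exact Or.inl (by nlinarith)
  · have : (4 : ℝ) ≤ n := by exact_mod_cast hn
    exact Or.inr (by nlinarith)

variable {m : ℝ}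

lemma div_sq_add_sq_sub_one_div_nonpos (hm : 0 < m) (ha : 2 * m ≤ a) :
    a / (a ^ 2 + y ^ 2) - 1 / (2 * m) ≤ 0 := by
  have ha0 : 0 < a := by linarith
  rw [sub_nonpos, div_le_div_iff₀ (by positivity) (by positivity)]
  nlinarith [sq_nonneg y]

lemma one_div_sub_div_sq_add_sq_le (hm : 1 ≤ m) (ha : a ∈ Set.Icc (2 * m) (2 * m + 1)) :
    1 / (2 * m) - a / (a ^ 2 + y ^ 2) ≤ (1 + y ^ 2) / 4 * (1 / m ^ 2) := by
  obtain ⟨hma, ham⟩ := ha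
  have hm0 : 0 < m := by linarith
  have ha0 : 0 < a := by linarith
  calc 1 / (2 * m) - a / (a ^ 2 + y ^ 2)
      = (a - 2 * m) / (2 * m * a) + y ^ 2 / (a * (a ^ 2 + y ^ 2)) := by
        field_simp
        ring
    _ ≤ 1 / (2 * m * (2 * m)) + y ^ 2 / (2 * m * (2 * m) ^ 2) := by
        gcongr
        · linarith
        · nlinarith [sq_nonneg y]
    _ ≤ (1 + y ^ 2) / 4 * (1 / m ^ 2) := by
        rw [div_add_div _ _ (by positivity) (by positivity),
          div_mul_div_comm, div_le_div_iff₀ (by positivity) (by positivity)]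
        nlinarith [sq_nonneg y, mul_nonneg (sq_nonneg y) (sub_nonneg.2 hm), pow_pos hm0 5]

end Rational

section Series

variable {y : ℝ} {a : ℕ+ → ℝ}

lemma summable_div_sq_add_sq_sub_one_div
    (ha : ∀ n : ℕ+, a n ∈ Set.Icc (2 * (n : ℝ)) (2 * n + 1)) :
    Summable fun n : ℕ+ => a n / (a n ^ 2 + y ^ 2) - 1 / (2 * (n : ℝ)) := by
  have hdom : Summable fun n : ℕ+ => (1 + y ^ 2) / 4 * (1 / (n : ℝ) ^ 2) :=
    summable_pnat_iff_summable_nat.mpr ((summable_one_div_nat_pow.mpr one_lt_two).mul_left _)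
  refine hdom.of_norm_bounded fun n => ?_
  have hn : (1 : ℝ) ≤ n := by exact_mod_cast n.pos
  rw [Real.norm_eq_abs, abs_of_nonpos (div_sq_add_sq_sub_one_div_nonpos (by linarith) (ha n).1),
    neg_sub]
  exact one_div_sub_div_sq_add_sq_le hn (ha n)

lemma tsum_div_sq_add_sq_sub_one_div_le
    (ha : ∀ n : ℕ+, a n ∈ Set.Icc (2 * (n : ℝ)) (2 * n + 1)) (hy : 64 ≤ y ^ 2) :
    ∑' n : ℕ+, (a n / (a n ^ 2 + y ^ 2) - 1 / (2 * (n : ℝ))) ≤ -9 / 10 := by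
  rw [← (summable_div_sq_add_sq_sub_one_div ha).sum_add_tsum_compl (s := Finset.Icc 1 7)]
  have htail : ∑' n : ↥((Finset.Icc 1 7 : Finset ℕ+) : Set ℕ+)ᶜ,
      (a n / (a n ^ 2 + y ^ 2) - 1 / (2 * (n : ℝ))) ≤ 0 :=
    tsum_nonpos fun n => div_sq_add_sq_sub_one_div_nonpos (by positivity) (ha n).1
  have hhead : ∑ n ∈ Finset.Icc (1 : ℕ+) 7, (a n / (a n ^ 2 + y ^ 2) - 1 / (2 * (n : ℝ))) ≤
      ∑ n ∈ Finset.Icc (1 : ℕ+) 7, (max (2 * (n : ℝ) / ((2 * n) ^ 2 + 64))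
        ((2 * (n : ℝ) + 1) / ((2 * n + 1) ^ 2 + 64)) - 1 / (2 * (n : ℝ))) :=
    Finset.sum_le_sum fun n _ =>
      sub_le_sub_right (div_sq_add_sq_le_max_of_mem_Icc_two_mul n (ha n) hy) _
  have hvalue : ∑ n ∈ Finset.Icc (1 : ℕ+) 7, (max (2 * (n : ℝ) / ((2 * n) ^ 2 + 64))
      ((2 * (n : ℝ) + 1) / ((2 * n + 1) ^ 2 + 64)) - 1 / (2 * (n : ℝ))) ≤ -9 / 10 := by
    rw [show Finset.Icc (1 : ℕ+) 7 = {1, 2, 3, 4, 5, 6, 7} from rfl]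
    norm_num [Finset.sum_insert, max_def]
  linarith

end Series

lemma eulerMascheroniConstant_lt_d4 : eulerMascheroniConstant < 0.6083 := by
  have h := eulerMascheroniConstant_lt_eulerMascheroniSeq' 16
  have hharmonic : (harmonic 16 : ℝ) = 2436559 / 720720 := by
    norm_num [harmonic_succ, harmonic_zero]
  have hlog : log 16 = 4 * log 2 := by
    rw [show (16 : ℝ) = 2 ^ 4 by norm_num, log_pow]
    norm_num
  rw [eulerMascheroniSeq', hharmonic] at h
  norm_num [hlog] at h
  linarith [log_two_gt_d9]

lemma log_pi_lt_d2 : log π < 1.15 := by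
  rw [log_lt_iff_lt_exp pi_pos]
  refine pi_lt_d6.trans_le (le_trans ?_ (sum_le_exp_of_nonneg (by norm_num) 12))
  norm_num [Finset.sum_range_succ, Nat.factorial_succ]

theorem alpha_neg_for_large_y (x y : ℝ) (hx0 : 0 < x) (hx : x ≤ 1 / 2) (hy : 8 ≤ y) :
    (1 / 2) * (Real.log π + eulerMascheroniConstant +
      x / (x ^ 2 + y ^ 2) + (1 - x) / ((1 - x) ^ 2 + y ^ 2) +
      (∑' n : ℕ+, ((2 * n + x) / ((2 * (n : ℝ) + x) ^ 2 + y ^ 2) - 1 / (2 * (n : ℝ)))) +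
      (∑' n : ℕ+, ((2 * n + 1 - x) / ((2 * (n : ℝ) + 1 - x) ^ 2 + y ^ 2) - 1 / (2 * (n : ℝ))))) <
      0 := by
  have hy2 : (64 : ℝ) ≤ y ^ 2 := by nlinarith
  have hx₁ : x / (x ^ 2 + y ^ 2) ≤ x / 64 :=
    div_le_div_of_nonneg_left hx0.le (by norm_num) (by nlinarith)
  have hx₂ : (1 - x) / ((1 - x) ^ 2 + y ^ 2) ≤ (1 - x) / 64 :=
    div_le_div_of_nonneg_left (by linarith) (by norm_num) (by nlinarith)
  have h₁ := tsum_div_sq_add_sq_sub_one_div_le (a := fun n : ℕ+ => 2 * (n : ℝ) + x)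
    (fun n => ⟨by linarith, by linarith⟩) hy2
  have h₂ := tsum_div_sq_add_sq_sub_one_div_le (a := fun n : ℕ+ => 2 * (n : ℝ) + 1 - x)
    (fun n => ⟨by linarith, by linarith⟩) hy2
  linarith [eulerMascheroniConstant_lt_d4, log_pi_lt_d2]
end

section
/- For every real y ≥ 4 and every real x with 0 < x ≤ 1/2, the expression (π²/8)·y²/cosh²(πy/2) + (π²/8)·y²/sinh²(πy/2) + (π/(4y))·tanh(πy/2) + 1/y² + (π²/(8y cosh²(πy/2)))·(3/(2y) + (π/2)tanh(πy/2)) is strictly less than 1/2 (indeed less than 0.2594088). -/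
/-!
For `t ≥ 0` the addition formulas give `cosh (a + t) ≥ cosh a + t sinh a` and
`sinh (a + t) ≥ sinh a + t cosh a`, so `b / cosh b` and `b / sinh b` are nonincreasing on `b ≥ a`
as soon as `cosh a ≤ a sinh a`, resp. `sinh a ≤ a cosh a`; both hold at `a = 2π`. Hence the two
`y² / cosh²`, `y² / sinh²` terms are largest at `y = 4`, and with `tanh ≤ 1` every other term is
too. The value at `y = 4` is then estimated from `exp (2π) > 535.48`.
-/

open Real Finset Nat

lemma div_cosh_le_div_cosh_of_le {a b : ℝ} (ha : 0 ≤ a) (h : cosh a ≤ a * sinh a) (hab : a ≤ b) :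
    b / cosh b ≤ a / cosh a := by
  rw [div_le_div_iff₀ (cosh_pos b) (cosh_pos a)]
  obtain ⟨t, ht, rfl⟩ : ∃ t, 0 ≤ t ∧ b = a + t := ⟨b - a, by linarith, by ring⟩
  have hsinh_a : 0 ≤ sinh a := sinh_nonneg_iff.mpr ha
  rw [cosh_add]
  nlinarith [mul_nonneg (mul_nonneg ha (cosh_pos a).le) (sub_nonneg.mpr (one_le_cosh t)),
    mul_nonneg (mul_nonneg ha hsinh_a) (sub_nonneg.mpr (self_le_sinh_iff.mpr ht)),
    mul_le_mul_of_nonneg_right h ht]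

lemma div_sinh_le_div_sinh_of_le {a b : ℝ} (ha : 0 < a) (h : sinh a ≤ a * cosh a) (hab : a ≤ b) :
    b / sinh b ≤ a / sinh a := by
  rw [div_le_div_iff₀ (sinh_pos_iff.mpr (by linarith)) (sinh_pos_iff.mpr ha)]
  obtain ⟨t, ht, rfl⟩ : ∃ t, 0 ≤ t ∧ b = a + t := ⟨b - a, by linarith, by ring⟩
  have hsinh_a : 0 ≤ sinh a := sinh_nonneg_iff.mpr ha.le
  rw [sinh_add]
  nlinarith [mul_nonneg (mul_nonneg ha.le hsinh_a) (sub_nonneg.mpr (one_le_cosh t)),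
    mul_nonneg (mul_nonneg ha.le (cosh_pos a).le) (sub_nonneg.mpr (self_le_sinh_iff.mpr ht)),
    mul_le_mul_of_nonneg_right h ht]

lemma lt_exp_two_pi : 535.48 < exp (2 * π) :=
  calc (535.48 : ℝ) < (∑ i ∈ range 10, (0.785398 : ℝ) ^ i / i !) ^ 8 := by
        norm_num [sum_range_succ, Nat.factorial]
    _ ≤ exp 0.785398 ^ 8 := by gcongr; exact sum_le_exp_of_nonneg (by norm_num) 10
    _ = exp ((8 : ℕ) * 0.785398) := (exp_nat_mul _ 8).symm
    _ ≤ exp (2 * π) := exp_le_exp.mpr (by push_cast; linarith [pi_gt_d6])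

lemma lt_sinh_two_pi : 267.73 < sinh (2 * π) := by
  have hexp := lt_exp_two_pi
  have hinv : exp (-(2 * π)) ≤ 0.01 := by
    rw [exp_neg, inv_le_comm₀ (exp_pos _) (by norm_num)]; linarith
  rw [sinh_eq]; linarith

lemma cosh_two_pi_le_mul_sinh : cosh (2 * π) ≤ 2 * π * sinh (2 * π) := by
  have h : cosh (2 * π) - sinh (2 * π) ≤ 1 := by
    rw [cosh_sub_sinh, exp_le_one_iff]; linarith [pi_pos]
  nlinarith [pi_gt_three, lt_sinh_two_pi]

lemma sinh_two_pi_le_mul_cosh : sinh (2 * π) ≤ 2 * π * cosh (2 * π) := by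
  nlinarith [pi_gt_three, lt_sinh_two_pi, sinh_lt_cosh (2 * π)]

lemma mul_sq_div_cosh_sq_le_of_four_le {y : ℝ} (hy : 4 ≤ y) :
    (π ^ 2 / 8) * y ^ 2 / cosh (π * y / 2) ^ 2 ≤ (π ^ 2 / 8) * 4 ^ 2 / cosh (2 * π) ^ 2 :=
  calc _ = (π * y / 2 / cosh (π * y / 2)) ^ 2 / 2 := by ring
    _ ≤ (2 * π / cosh (2 * π)) ^ 2 / 2 := by
      gcongr ?_ ^ 2 / 2
      exact div_cosh_le_div_cosh_of_le two_pi_pos.le cosh_two_pi_le_mul_sinh (by nlinarith [pi_pos])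
    _ = _ := by ring

lemma mul_sq_div_sinh_sq_le_of_four_le {y : ℝ} (hy : 4 ≤ y) :
    (π ^ 2 / 8) * y ^ 2 / sinh (π * y / 2) ^ 2 ≤ (π ^ 2 / 8) * 4 ^ 2 / sinh (2 * π) ^ 2 :=
  calc _ = (π * y / 2 / sinh (π * y / 2)) ^ 2 / 2 := by ring
    _ ≤ (2 * π / sinh (2 * π)) ^ 2 / 2 := by
      gcongr ?_ ^ 2 / 2
      exact div_sinh_le_div_sinh_of_le two_pi_pos sinh_two_pi_le_mul_cosh (by nlinarith [pi_pos])
    _ = _ := by ring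

-- There is only about `1e-7` of room, which dictates the precision of the constants.
lemma hyperbolic_sum_at_four_lt :
    (π ^ 2 / 8) * 4 ^ 2 / cosh (2 * π) ^ 2 + (π ^ 2 / 8) * 4 ^ 2 / sinh (2 * π) ^ 2 +
        π / (4 * 4) + 1 / 4 ^ 2 + π ^ 2 / (8 * 4 * cosh (2 * π) ^ 2) * (3 / (2 * 4) + π / 2) <
      0.2594088 := by
  have hS := lt_sinh_two_pi
  have hC : 267.73 ≤ cosh (2 * π) := hS.le.trans (sinh_lt_cosh _).le
  have hπ : π ≤ 3.141593 := pi_lt_d6.le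
  have hπ2 : π ^ 2 ≤ 9.869607 := by nlinarith [pi_pos]
  calc _ = 2 * π ^ 2 / cosh (2 * π) ^ 2 + 2 * π ^ 2 / sinh (2 * π) ^ 2 + π / 16 + 1 / 16 +
        π ^ 2 * (3 / 8 + π / 2) / 32 / cosh (2 * π) ^ 2 := by ring
    _ ≤ 2 * 9.869607 / 267.73 ^ 2 + 2 * 9.869607 / 267.73 ^ 2 + 3.141593 / 16 + 1 / 16 +
        9.869607 * (3 / 8 + 3.141593 / 2) / 32 / 267.73 ^ 2 := by gcongr
    _ < 0.2594088 := by norm_num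

theorem hyperbolic_bound_general (y : ℝ) (hy : 4 ≤ y) :
    (π ^ 2 / 8) * y ^ 2 / Real.cosh (π * y / 2) ^ 2 +
        (π ^ 2 / 8) * y ^ 2 / Real.sinh (π * y / 2) ^ 2 +
        (π / (4 * y)) * Real.tanh (π * y / 2) + 1 / y ^ 2 +
        (π ^ 2 / (8 * y * Real.cosh (π * y / 2) ^ 2)) *
          (3 / (2 * y) + (π / 2) * Real.tanh (π * y / 2)) < 0.2594088 ∧
    (π ^ 2 / 8) * y ^ 2 / Real.cosh (π * y / 2) ^ 2 +
        (π ^ 2 / 8) * y ^ 2 / Real.sinh (π * y / 2) ^ 2 +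
        (π / (4 * y)) * Real.tanh (π * y / 2) + 1 / y ^ 2 +
        (π ^ 2 / (8 * y * Real.cosh (π * y / 2) ^ 2)) *
          (3 / (2 * y) + (π / 2) * Real.tanh (π * y / 2)) < 1 / 2 := by
  have hu : 0 < π * y / 2 := by have := pi_pos; positivity
  have htanh_le_one : tanh (π * y / 2) ≤ 1 := (tanh_lt_one _).le
  have htanh_nonneg : 0 ≤ tanh (π * y / 2) := by
    rw [tanh_eq_sinh_div_cosh]; exact div_nonneg (sinh_nonneg_iff.mpr hu.le) (cosh_pos _).le
  have hcosh : cosh (2 * π) ≤ cosh (π * y / 2) := by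
    rw [cosh_le_cosh, abs_of_pos two_pi_pos, abs_of_pos hu]; nlinarith [pi_pos]
  have hT3 : π / (4 * y) * tanh (π * y / 2) ≤ π / (4 * 4) :=
    (mul_le_of_le_one_right (by positivity) htanh_le_one).trans (by gcongr)
  have hT4 : 1 / y ^ 2 ≤ 1 / 4 ^ 2 := by gcongr
  have hT5 : π ^ 2 / (8 * y * cosh (π * y / 2) ^ 2) * (3 / (2 * y) + π / 2 * tanh (π * y / 2)) ≤
      π ^ 2 / (8 * 4 * cosh (2 * π) ^ 2) * (3 / (2 * 4) + π / 2) := by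
    gcongr
    exact mul_le_of_le_one_right (by positivity) htanh_le_one
  have key := (add_le_add (add_le_add (add_le_add (add_le_add
    (mul_sq_div_cosh_sq_le_of_four_le hy) (mul_sq_div_sinh_sq_le_of_four_le hy)) hT3) hT4)
    hT5).trans_lt hyperbolic_sum_at_four_lt
  exact ⟨key, key.trans (by norm_num)⟩

theorem hyperbolic_bound (y x : ℝ) (hy : 4 ≤ y) (hx0 : 0 < x) (hx : x ≤ 1 / 2) :
    (π ^ 2 / 8) * y ^ 2 / Real.cosh (π * y / 2) ^ 2 +
        (π ^ 2 / 8) * y ^ 2 / Real.sinh (π * y / 2) ^ 2 +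
        (π / (4 * y)) * Real.tanh (π * y / 2) + 1 / y ^ 2 +
        (π ^ 2 / (8 * y * Real.cosh (π * y / 2) ^ 2)) *
          (3 / (2 * y) + (π / 2) * Real.tanh (π * y / 2)) < 0.2594088 ∧
    (π ^ 2 / 8) * y ^ 2 / Real.cosh (π * y / 2) ^ 2 +
        (π ^ 2 / 8) * y ^ 2 / Real.sinh (π * y / 2) ^ 2 +
        (π / (4 * y)) * Real.tanh (π * y / 2) + 1 / y ^ 2 +
        (π ^ 2 / (8 * y * Real.cosh (π * y / 2) ^ 2)) *
          (3 / (2 * y) + (π / 2) * Real.tanh (π * y / 2)) < 1 / 2 :=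
  hyperbolic_bound_general y hy
end

section
/- For every real y ≥ 4 and every real x with 0 < x ≤ 1/2, the equality Σ_{n=0}^∞ (((2n+x)² - y²)/(((2n+x)² + y²)²) - ((2n+1-x)² - y²)/(((2n+1-x)² + y²)²)) = 0 holds if and only if x = 1/2. -/
set_option maxHeartbeats 1000000

open Set Filter Topology

noncomputable def zff (u t : ℝ) : ℝ := (t^2 - u)/((t^2+u)^2)
noncomputable def zf1 (u t : ℝ) : ℝ := 2*t*(3*u - t^2)/((t^2+u)^3)
noncomputable def zf2 (u t : ℝ) : ℝ := (6*t^4 - 36*u*t^2 + 6*u^2)/((t^2+u)^4)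
noncomputable def zf3 (u t : ℝ) : ℝ := 24*t*(10*u*t^2 - t^4 - 5*u^2)/((t^2+u)^5)
noncomputable def zWW (u t : ℝ) : ℝ := 5*u^2/((t^2+u)^4) + 8/((t^2+u)^2)
noncomputable def zW1 (u t : ℝ) : ℝ := -8*t*(5*u^2 + 4*(t^2+u)^2)/((t^2+u)^5)
noncomputable def zc (u A : ℝ) (k : ℕ) : ℝ := zff u (A + 2*k) + zWW u (A + 2*k)

lemma zhd_ff {u : ℝ} (hu : 0 < u) (t : ℝ) : HasDerivAt (zff u) (zf1 u t) t := by
  have hne : ((t^2+u)^2 : ℝ) ≠ 0 := by positivity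
  have h1 : HasDerivAt (fun t : ℝ => t^2 - u) (2*t) t := by
    simpa using (hasDerivAt_pow 2 t).sub_const u
  have h0 : HasDerivAt (fun t : ℝ => t^2 + u) (2*t) t := by
    simpa using (hasDerivAt_pow 2 t).add_const u
  have h2 : HasDerivAt (fun t : ℝ => (t^2+u)^2) (2*(t^2+u)^1*(2*t)) t := h0.pow 2
  have : HasDerivAt (zff u) _ t := h1.div h2 hne
  convert this using 1
  unfold zf1
  have hne3 : ((t^2+u) : ℝ) ≠ 0 := by positivity
  field_simp
  ring

lemma zhd_base {u : ℝ} (t : ℝ) : HasDerivAt (fun t : ℝ => t^2 + u) (2*t) t := by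
  simpa using (hasDerivAt_pow 2 t).add_const u

lemma zhd_f1 {u : ℝ} (hu : 0 < u) (t : ℝ) : HasDerivAt (zf1 u) (zf2 u t) t := by
  have hne : ((t^2+u)^3 : ℝ) ≠ 0 := by positivity
  have h1 : HasDerivAt (fun t : ℝ => 2*t*(3*u - t^2)) (2*(3*u-t^2) + 2*t*(-(2*t))) t := by
    have ha : HasDerivAt (fun t : ℝ => 2*t) 2 t := by simpa using (hasDerivAt_id t).const_mul 2
    have hb : HasDerivAt (fun t : ℝ => 3*u - t^2) (-(2*t)) t := by
      simpa using ((hasDerivAt_pow 2 t).const_sub (3*u))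
    exact ha.mul hb
  have h2 : HasDerivAt (fun t : ℝ => (t^2+u)^3) (3*(t^2+u)^2*(2*t)) t := (zhd_base t).pow 3
  have : HasDerivAt (zf1 u) _ t := h1.div h2 hne
  convert this using 1
  unfold zf2
  have hne3 : ((t^2+u) : ℝ) ≠ 0 := by positivity
  field_simp
  ring

lemma zhd_f2 {u : ℝ} (hu : 0 < u) (t : ℝ) : HasDerivAt (zf2 u) (zf3 u t) t := by
  have hne : ((t^2+u)^4 : ℝ) ≠ 0 := by positivity
  have h1 : HasDerivAt (fun t : ℝ => 6*t^4 - 36*u*t^2 + 6*u^2)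
      (6*(4*t^3) - 36*u*(2*t)) t := by
    have ha : HasDerivAt (fun t : ℝ => 6*t^4) (6*(4*t^3)) t := by
      simpa using (hasDerivAt_pow 4 t).const_mul 6
    have hb : HasDerivAt (fun t : ℝ => 36*u*t^2) (36*u*(2*t)) t := by
      simpa using (hasDerivAt_pow 2 t).const_mul (36*u)
    simpa using (ha.sub hb).add_const (6*u^2)
  have h2 : HasDerivAt (fun t : ℝ => (t^2+u)^4) (4*(t^2+u)^3*(2*t)) t := (zhd_base t).pow 4
  have : HasDerivAt (zf2 u) _ t := h1.div h2 hne
  convert this using 1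
  unfold zf3
  have hne3 : ((t^2+u) : ℝ) ≠ 0 := by positivity
  field_simp
  ring

lemma zhd_WW {u : ℝ} (hu : 0 < u) (t : ℝ) : HasDerivAt (zWW u) (zW1 u t) t := by
  have hne4 : ((t^2+u)^4 : ℝ) ≠ 0 := by positivity
  have hne2 : ((t^2+u)^2 : ℝ) ≠ 0 := by positivity
  have h2 : HasDerivAt (fun t : ℝ => (t^2+u)^4) (4*(t^2+u)^3*(2*t)) t := (zhd_base t).pow 4
  have h3 : HasDerivAt (fun t : ℝ => (t^2+u)^2) (2*(t^2+u)^1*(2*t)) t := (zhd_base t).pow 2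
  have ha := (hasDerivAt_const t (5*u^2)).div h2 hne4
  have hb := (hasDerivAt_const t (8:ℝ)).div h3 hne2
  have : HasDerivAt (zWW u) _ t := ha.add hb
  convert this using 1
  unfold zW1
  have hne3 : ((t^2+u) : ℝ) ≠ 0 := by positivity
  field_simp
  ring

-- WW is antitone on [0,∞)
lemma zanti_WW {u : ℝ} (hu : 0 < u) : AntitoneOn (zWW u) (Ici (0:ℝ)) := by
  have hcont : ContinuousOn (zWW u) (Ici 0) :=
    (fun t _ => ((zhd_WW hu t).continuousAt).continuousWithinAt)
  apply antitoneOn_of_deriv_nonpos (convex_Ici _) hcont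
  · intro t ht
    exact ((zhd_WW hu t).differentiableAt).differentiableWithinAt
  · intro t ht
    rw [interior_Ici] at ht
    rw [(zhd_WW hu t).deriv]
    unfold zW1
    apply div_nonpos_of_nonpos_of_nonneg
    · have ht0 : (0:ℝ) < t := ht
      nlinarith [sq_nonneg (t^2+u), sq_nonneg u]
    · positivity

-- WW + f2 antitone on [a,∞) for a ≥ 0 (no extra constraint)
lemma zanti_WpF {u a : ℝ} (hu : 0 < u) (ha0 : 0 ≤ a) :
    AntitoneOn (fun t => zWW u t + zf2 u t) (Ici a) := by
  have hcont : ContinuousOn (fun t => zWW u t + zf2 u t) (Ici a) :=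
    (fun t _ => (((zhd_WW hu t).add (zhd_f2 hu t)).continuousAt).continuousWithinAt)
  apply antitoneOn_of_deriv_nonpos (convex_Ici _) hcont
  · intro t ht
    exact (((zhd_WW hu t).add (zhd_f2 hu t)).differentiableAt).differentiableWithinAt
  · intro t ht
    rw [interior_Ici] at ht
    have ht0 : a < t := ht
    have htp : 0 < t := lt_of_le_of_lt ha0 ht0
    rw [(show HasDerivAt (fun t => zWW u t + zf2 u t) _ t from (zhd_WW hu t).add (zhd_f2 hu t)).deriv]
    have hne : ((t^2+u) : ℝ) ≠ 0 := by positivity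
    have heq : zW1 u t + zf3 u t = (-8*t*(7*t^4 - 22*u*t^2 + 24*u^2))/((t^2+u)^5) := by
      unfold zW1 zf3; field_simp; ring
    rw [heq]
    apply div_nonpos_of_nonpos_of_nonneg
    · nlinarith [sq_nonneg (7*t^2 - 11*u), sq_nonneg u, htp.le]
    · positivity

-- WW - f2 antitone on [a,∞) when u ≤ 3 a^2
lemma zanti_WmF {u a : ℝ} (hu : 0 < u) (ha0 : 0 ≤ a) (hau : u ≤ 3*a^2) :
    AntitoneOn (fun t => zWW u t - zf2 u t) (Ici a) := by
  have hcont : ContinuousOn (fun t => zWW u t - zf2 u t) (Ici a) :=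
    (fun t _ => (((zhd_WW hu t).sub (zhd_f2 hu t)).continuousAt).continuousWithinAt)
  apply antitoneOn_of_deriv_nonpos (convex_Ici _) hcont
  · intro t ht
    exact (((zhd_WW hu t).sub (zhd_f2 hu t)).differentiableAt).differentiableWithinAt
  · intro t ht
    rw [interior_Ici] at ht
    have ht0 : a < t := ht
    have htp : 0 < t := lt_of_le_of_lt ha0 ht0
    have hta : a^2 ≤ t^2 := by nlinarith
    rw [(show HasDerivAt (fun t => zWW u t - zf2 u t) _ t from (zhd_WW hu t).sub (zhd_f2 hu t)).deriv]
    have hne : ((t^2+u) : ℝ) ≠ 0 := by positivity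
    have heq : zW1 u t - zf3 u t = (-8*t*(t^4 + 38*u*t^2 - 6*u^2))/((t^2+u)^5) := by
      unfold zW1 zf3; field_simp; ring
    rw [heq]
    apply div_nonpos_of_nonpos_of_nonneg
    · have h6 : 6*u^2 ≤ 38*u*t^2 := by
        nlinarith [mul_le_mul_of_nonneg_left hta hu.le, mul_le_mul_of_nonneg_left hau hu.le]
      nlinarith [pow_nonneg htp.le 4, htp.le, h6]
    · positivity

lemma zperterm {u a m s0 : ℝ} (hu : 0 < u) (ha0 : 0 ≤ a) (hau : u ≤ 3*a^2)
    (ham : a ≤ m - 1) (hs0 : 0 < s0) (hs0' : s0 ≤ 1/2) :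
    zff u (m - s0) - zff u (m + s0) ≤
      s0 * ((zff u (m-1) + zWW u (m-1)) - (zff u (m+1) + zWW u (m+1))) := by
  set φ : ℝ → ℝ := fun s => zff u (m - s) - zff u (m + s) with hφ
  set ψ : ℝ → ℝ := fun s => -zf1 u (m - s) - zf1 u (m + s) with hψ
  have hms : ∀ s : ℝ, HasDerivAt (fun s : ℝ => m - s) (-1) s := fun s => by
    simpa using (hasDerivAt_id s).const_sub m
  have hps : ∀ s : ℝ, HasDerivAt (fun s : ℝ => m + s) 1 s := fun s => by
    simpa using (hasDerivAt_id s).const_add m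
  have hφd : ∀ s : ℝ, HasDerivAt φ (ψ s) s := by
    intro s
    have h1 : HasDerivAt (fun s : ℝ => zff u (m - s)) (zf1 u (m-s) * (-1)) s :=
      (zhd_ff hu (m-s)).comp s (hms s)
    have h2 : HasDerivAt (fun s : ℝ => zff u (m + s)) (zf1 u (m+s) * 1) s :=
      (zhd_ff hu (m+s)).comp s (hps s)
    have : HasDerivAt φ _ s := h1.sub h2
    convert this using 1
    show -zf1 u (m - s) - zf1 u (m + s) = _
    ring
  have hψd : ∀ s : ℝ, HasDerivAt ψ (zf2 u (m-s) - zf2 u (m+s)) s := by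
    intro s
    have h1 : HasDerivAt (fun s : ℝ => zf1 u (m - s)) (zf2 u (m-s) * (-1)) s :=
      (zhd_f1 hu (m-s)).comp s (hms s)
    have h2 : HasDerivAt (fun s : ℝ => zf1 u (m + s)) (zf2 u (m+s) * 1) s :=
      (zhd_f1 hu (m+s)).comp s (hps s)
    have : HasDerivAt ψ _ s := (h1.neg).sub h2
    convert this using 1
    ring
  have hφc : ∀ (c d : ℝ), ContinuousOn φ (Icc c d) :=
    fun c d t _ => (hφd t).continuousAt.continuousWithinAt
  have hψc : ∀ (c d : ℝ), ContinuousOn ψ (Icc c d) :=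
    fun c d t _ => (hψd t).continuousAt.continuousWithinAt
  have hφ0 : φ 0 = 0 := by simp [hφ]
  -- MVT 1 on [0, s0]
  obtain ⟨σ, hσmem, hσ⟩ := exists_hasDerivAt_eq_slope φ ψ hs0 (hφc 0 s0)
    (fun s _ => hφd s)
  -- MVT 2 on [0, 1]
  obtain ⟨τ, hτmem, hτ⟩ := exists_hasDerivAt_eq_slope φ ψ (one_pos) (hφc 0 1)
    (fun s _ => hφd s)
  rw [hφ0] at hσ hτ
  have hφs0 : φ s0 = s0 * ψ σ := by
    field_simp at hσ
    rw [sub_zero, sub_zero, eq_div_iff hs0.ne', mul_comm] at hσ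
    exact hσ.symm
  have hφ1 : φ 1 = ψ τ := by
    simpa using hτ.symm
  -- ΔW
  set ΔW : ℝ := zWW u (m-1) - zWW u (m+1) with hΔW
  have hm1a : a ≤ m - 1 := ham
  have hm10 : (0:ℝ) ≤ m - 1 := le_trans ha0 ham
  have hΔWnn : 0 ≤ ΔW := by
    have := zanti_WW hu (show (m-1) ∈ Ici (0:ℝ) from hm10)
      (show (m+1) ∈ Ici (0:ℝ) by simp only [mem_Ici]; linarith) (by linarith)
    simp only [hΔW]; linarith
  -- bound |f2 p - f2 q| ≤ ΔW for p q in [m-1, m+1]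
  have hf2bound : ∀ p q : ℝ, m - 1 ≤ p → p ≤ q → q ≤ m + 1 →
      zf2 u p - zf2 u q ≤ ΔW ∧ zf2 u q - zf2 u p ≤ ΔW := by
    intro p q hp hpq hq
    have hpa : p ∈ Ici a := by simp only [mem_Ici]; linarith
    have hqa : q ∈ Ici a := by simp only [mem_Ici]; linarith
    have hWp : zWW u p ≤ zWW u (m-1) := by
      refine zanti_WW hu ?_ ?_ hp
      · simp only [mem_Ici]; linarith
      · simp only [mem_Ici]; linarith
    have hWq : zWW u (m+1) ≤ zWW u q := by
      refine zanti_WW hu ?_ ?_ hq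
      · simp only [mem_Ici]; linarith
      · simp only [mem_Ici]; linarith
    have h1 : zWW u q - zf2 u q ≤ zWW u p - zf2 u p := zanti_WmF hu ha0 hau hpa hqa hpq
    have h2 : zWW u q + zf2 u q ≤ zWW u p + zf2 u p := zanti_WpF hu ha0 hpa hqa hpq
    constructor
    · simp only [hΔW]; linarith
    · simp only [hΔW]; linarith
  -- ψ σ - ψ τ ≤ ΔW via MVT3
  have hστ : ψ σ - ψ τ ≤ ΔW := by
    rcases lt_trichotomy σ τ with h | h | h
    · obtain ⟨ρ, hρmem, hρ⟩ := exists_hasDerivAt_eq_slope ψ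
        (fun s => zf2 u (m-s) - zf2 u (m+s)) h (hψc σ τ) (fun s _ => hψd s)
      have hne : τ - σ ≠ 0 := ne_of_gt (by linarith)
      have hE : ψ τ - ψ σ = (τ - σ) * (zf2 u (m-ρ) - zf2 u (m+ρ)) := by
        rw [eq_div_iff hne] at hρ
        linear_combination -hρ
      have hρ0 : 0 < ρ := lt_trans hσmem.1 hρmem.1
      have hρ1 : ρ < 1 := lt_trans hρmem.2 hτmem.2
      have hb := hf2bound (m-ρ) (m+ρ) (by linarith) (by linarith) (by linarith)
      have hτσ1 : τ - σ ≤ 1 := by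
        have := hτmem.2; have := hσmem.1; linarith
      have hτσ0 : 0 < τ - σ := by linarith
      nlinarith [hb.1, hb.2, hΔWnn]
    · rw [h]; linarith
    · obtain ⟨ρ, hρmem, hρ⟩ := exists_hasDerivAt_eq_slope ψ
        (fun s => zf2 u (m-s) - zf2 u (m+s)) h (hψc τ σ) (fun s _ => hψd s)
      have hne : σ - τ ≠ 0 := ne_of_gt (by linarith)
      have hE : ψ σ - ψ τ = (σ - τ) * (zf2 u (m-ρ) - zf2 u (m+ρ)) := by
        rw [eq_div_iff hne] at hρ
        linear_combination -hρ
      have hρ0 : 0 < ρ := lt_trans hτmem.1 hρmem.1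
      have hρ1 : ρ < 1 := by
        have := hρmem.2; have := hσmem.2; have : σ < 1 := by linarith [hs0']
        linarith [hρmem.2]
      have hb := hf2bound (m-ρ) (m+ρ) (by linarith) (by linarith) (by linarith)
      have hστ1 : σ - τ ≤ 1 := by
        have := hσmem.2; have := hτmem.1; linarith
      have hστ0 : 0 < σ - τ := by linarith
      nlinarith [hb.1, hb.2, hΔWnn]
  -- assemble
  have : φ s0 ≤ s0 * (φ 1 + ΔW) := by
    rw [hφs0, hφ1]
    have : ψ σ ≤ ψ τ + ΔW := by linarith
    nlinarith [hs0.le]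
  calc zff u (m - s0) - zff u (m + s0) = φ s0 := rfl
    _ ≤ s0 * (φ 1 + ΔW) := this
    _ = s0 * ((zff u (m-1) + zWW u (m-1)) - (zff u (m+1) + zWW u (m+1))) := by
        simp only [hφ, hΔW]; ring

lemma zsummable_ff {u : ℝ} (hu : 1 ≤ u) {c : ℝ} (hc : 0 ≤ c) :
    Summable (fun n : ℕ => zff u (2*n + c)) := by
  have hu0 : 0 < u := by linarith
  have hb : Summable (fun n : ℕ => 1/((n:ℝ)+1)^2) := by
    have := Real.summable_one_div_nat_pow.mpr (show 1 < 2 by norm_num)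
    have h2 := (summable_nat_add_iff 1).mpr this
    simpa using h2
  apply Summable.of_norm_bounded hb
  intro n
  have hd : (0:ℝ) < (2*n+c)^2 + u := by positivity
  have h1 : |zff u (2*n + c)| ≤ 1/((2*n+c)^2 + u) := by
    unfold zff
    rw [abs_div, abs_of_pos (by positivity : (0:ℝ) < ((2*n+c)^2+u)^2)]
    rw [div_le_div_iff₀ (by positivity) hd]
    have habs : |(2*(n:ℝ)+c)^2 - u| ≤ (2*n+c)^2 + u := by
      rw [abs_le]; constructor <;> nlinarith [sq_nonneg (2*(n:ℝ)+c)]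
    calc |(2*(n:ℝ)+c)^2 - u| * ((2*↑n+c)^2 + u) ≤ ((2*↑n+c)^2 + u) * ((2*↑n+c)^2 + u) := by
          apply mul_le_mul_of_nonneg_right habs hd.le
      _ = ((2*↑n+c)^2 + u)^2 := by ring
      _ ≤ 1 * ((2*↑n+c)^2+u)^2 := by ring_nf; rfl
  refine le_trans h1 ?_
  rw [div_le_div_iff₀ hd (by positivity)]
  have hkey : ((n:ℝ)+1)^2 ≤ (2*n+c)^2 + u := by
    rcases Nat.eq_zero_or_pos n with h0 | h1
    · subst h0; push_cast; nlinarith [sq_nonneg c]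
    · have hn1 : (1:ℝ) ≤ (n:ℝ) := by exact_mod_cast h1
      nlinarith [mul_nonneg (by positivity : (0:ℝ) ≤ 4*(n:ℝ)) hc, sq_nonneg c]
  nlinarith [hkey]

lemma zff_sub {u : ℝ} (hu : 0 < u) (a b : ℝ) :
    zff u a - zff u b =
      ((b^2-a^2) * ((a^2-u)*(b^2-u) - 4*u^2)) / ((a^2+u)^2 * (b^2+u)^2) := by
  unfold zff
  have h1 : (a^2+u) ≠ 0 := by positivity
  have h2 : (b^2+u) ≠ 0 := by positivity
  field_simp
  ring

-- bound for a term with both points below sqrt u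
lemma zff_sub_le {u a b D : ℝ} (hu : 0 < u) (ha : a^2 ≤ u) (hb : b^2 ≤ u)
    (hab : a^2 ≤ b^2) (hD : (a^2+u)^2 * (b^2+u)^2 ≤ D) :
    zff u a - zff u b ≤ (b^2 - a^2) * (-3*u^2) / D := by
  have hden : (0:ℝ) < (a^2+u)^2 * (b^2+u)^2 := by positivity
  have hDpos : 0 < D := lt_of_lt_of_le hden hD
  rw [zff_sub hu a b]
  have hnum : (b^2-a^2) * ((a^2-u)*(b^2-u) - 4*u^2) ≤ (b^2 - a^2) * (-3*u^2) := by
    apply mul_le_mul_of_nonneg_left _ (by linarith)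
    nlinarith [sq_nonneg a, sq_nonneg b]
  have hnum0 : (b^2 - a^2) * (-3*u^2) ≤ 0 := by nlinarith [sq_nonneg u]
  rw [div_le_div_iff₀ hden hDpos]
  have s1 : (b^2-a^2)*((a^2-u)*(b^2-u)-4*u^2) * D ≤ (b^2-a^2)*(-3*u^2) * D :=
    mul_le_mul_of_nonneg_right hnum hDpos.le
  have s2 : (b^2-a^2)*(-3*u^2) * D ≤ (b^2-a^2)*(-3:ℝ)*u^2 * ((a^2+u)^2*(b^2+u)^2) := by
    have := mul_le_mul_of_nonpos_left hD hnum0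
    nlinarith [this]
  nlinarith [s1, s2]

lemma zfinal {u : ℝ} (hu : 16 ≤ u) :
    5*u^2/(u+49/4)^4 + 8/(u+49/4)^2 <
      2*(3*u^2/(u+1)^4 + 15*u^2/((u+25/4)^2*(u+9)^2)) := by
  have h16 : (0:ℝ) ≤ u - 16 := by linarith
  have h1 : (0:ℝ) < u + 1 := by linarith
  have h2 : (0:ℝ) < u + 25/4 := by linarith
  have h3 : (0:ℝ) < u + 9 := by linarith
  have h4 : (0:ℝ) < u + 49/4 := by linarith
  rw [← sub_pos]
  have hrw : 2*(3*u^2/(u+1)^4 + 15*u^2/((u+25/4)^2*(u+9)^2))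
      - (5*u^2/(u+49/4)^4 + 8/(u+49/4)^2)
      = (6*u^2*((u+25/4)^2*(u+9)^2)*(u+49/4)^4
         + 30*u^2*(u+1)^4*(u+49/4)^4
         - 5*u^2*(u+1)^4*((u+25/4)^2*(u+9)^2)
         - 8*(u+1)^4*((u+25/4)^2*(u+9)^2)*(u+49/4)^2)
        / ((u+1)^4*((u+25/4)^2*(u+9)^2)*(u+49/4)^4) := by
    field_simp
    ring
  rw [hrw]
  apply div_pos
  · nlinarith [pow_nonneg h16 2, pow_nonneg h16 3, pow_nonneg h16 4, pow_nonneg h16 5,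
      pow_nonneg h16 6, pow_nonneg h16 7, pow_nonneg h16 8, pow_nonneg h16 9,
      pow_nonneg h16 10, h16]
  · positivity

lemma zS_neg' (u x : ℝ) (N : ℕ) (hu16 : 16 ≤ u) (hx0 : 0 < x) (hx : x < 1/2)
    (hN2 : 2 ≤ N)
    (hAu : u ≤ 3*(2*(N:ℝ) - 1/2)^2) (hA2u : (2*(N:ℝ) - 1/2)^2 ≤ u) :
    (∑' n : ℕ, (zff u (2*n+x) - zff u (2*n+1-x))) < 0 := by
  have hu0 : (0:ℝ) < u := by linarith
  have hu1 : (1:ℝ) ≤ u := by linarith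
  have hN2R : (2:ℝ) ≤ (N:ℝ) := by exact_mod_cast hN2
  have hs0 : 0 < 1/2 - x := by linarith
  have hs0' : 1/2 - x ≤ 1/2 := by linarith
  have hA0 : (0:ℝ) ≤ 2*(N:ℝ) - 1/2 := by linarith
  have hsum : Summable (fun n : ℕ => zff u (2*n+x) - zff u (2*n+1-x)) := by
    have h1 := zsummable_ff hu1 hx0.le
    have h2 := zsummable_ff hu1 (show (0:ℝ) ≤ 1 - x by linarith)
    have he : (fun n : ℕ => zff u (2*n+(1-x))) = (fun n : ℕ => zff u (2*n+1-x)) := by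
      funext n; ring_nf
    rw [he] at h2
    exact h1.sub h2
  -- ==================== tail estimate ====================
  have hpt : ∀ k : ℕ, zff u (2*((k+N:ℕ):ℝ)+x) - zff u (2*((k+N:ℕ):ℝ)+1-x) ≤
      (1/2-x) * (zc u (2*(N:ℝ) - 1/2) k - zc u (2*(N:ℝ) - 1/2) (k+1)) := by
    intro k
    have hk0 : (0:ℝ) ≤ (k:ℝ) := Nat.cast_nonneg k
    have hm : 2*(N:ℝ) - 1/2 ≤ (2*((N:ℝ)+(k:ℝ))+1/2) - 1 := by linarith
    have H := zperterm (m := 2*((N:ℝ)+(k:ℝ))+1/2) hu0 hA0 hAu hm hs0 hs0'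
    have e1 : 2*((N:ℝ)+(k:ℝ))+1/2 - (1/2-x) = 2*(((k+N : ℕ)):ℝ)+x := by push_cast; ring
    have e2 : 2*((N:ℝ)+(k:ℝ))+1/2 + (1/2-x) = 2*(((k+N : ℕ)):ℝ)+1-x := by push_cast; ring
    have e3 : 2*((N:ℝ)+(k:ℝ))+1/2 - 1 = (2*(N:ℝ) - 1/2) + 2*(k:ℝ) := by ring
    have e4 : 2*((N:ℝ)+(k:ℝ))+1/2 + 1 = (2*(N:ℝ) - 1/2) + 2*(((k+1:ℕ)):ℝ) := by
      push_cast; ring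
    rw [e1, e2, e3, e4] at H
    exact H
  have hps : ∀ M : ℕ,
      ∑ k ∈ Finset.range M, (zff u (2*((k+N:ℕ):ℝ)+x) - zff u (2*((k+N:ℕ):ℝ)+1-x))
      ≤ (1/2-x) * (zc u (2*(N:ℝ) - 1/2) 0 - zc u (2*(N:ℝ) - 1/2) M) := by
    intro M
    calc ∑ k ∈ Finset.range M, (zff u (2*((k+N:ℕ):ℝ)+x) - zff u (2*((k+N:ℕ):ℝ)+1-x))
        ≤ ∑ k ∈ Finset.range M,
            (1/2-x) * (zc u (2*(N:ℝ) - 1/2) k - zc u (2*(N:ℝ) - 1/2) (k+1)) :=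
          Finset.sum_le_sum (fun k _ => hpt k)
      _ = (1/2-x) * ∑ k ∈ Finset.range M,
            (zc u (2*(N:ℝ) - 1/2) k - zc u (2*(N:ℝ) - 1/2) (k+1)) := by
          rw [Finset.mul_sum]
      _ = (1/2-x) * (zc u (2*(N:ℝ) - 1/2) 0 - zc u (2*(N:ℝ) - 1/2) M) := by
          rw [Finset.sum_range_sub' (zc u (2*(N:ℝ) - 1/2)) M]
  have hcbound : ∀ M : ℕ, ‖zc u (2*(N:ℝ) - 1/2) M‖ ≤ 2/((M:ℝ)+1) := by
    intro M
    have hM0 : (0:ℝ) ≤ (M:ℝ) := Nat.cast_nonneg M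
    have htM : 2*(M:ℝ) ≤ (2*(N:ℝ) - 1/2) + 2*(M:ℝ) := by linarith
    have ht0 : (0:ℝ) ≤ (2*(N:ℝ) - 1/2) + 2*(M:ℝ) := by linarith
    generalize hgen : (2*(N:ℝ) - 1/2) + 2*(M:ℝ) = t at htM ht0
    have hdpos : (0:ℝ) < t^2 + u := by positivity
    have h1 : |zff u t| ≤ 1/(t^2+u) := by
      unfold zff
      rw [abs_div, abs_of_pos (by positivity : (0:ℝ) < (t^2+u)^2)]
      rw [div_le_div_iff₀ (by positivity) hdpos]
      have habs : |t^2 - u| ≤ t^2 + u := by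
        rw [abs_le]; constructor <;> nlinarith [sq_nonneg t]
      nlinarith [habs, hdpos]
    have h2 : zWW u t ≤ 13/16 * (1/(t^2+u)) := by
      unfold zWW
      have k1 : 5*u^2/((t^2+u)^4) ≤ 5/16 * (1/(t^2+u)) := by
        rw [mul_one_div, div_le_div_iff₀ (by positivity) (by positivity)]
        have hcube : u^3 ≤ (t^2+u)^3 := by
          apply pow_le_pow_left₀ hu0.le
          nlinarith [sq_nonneg t]
        have h16 : 16*u^2 ≤ (t^2+u)^3 := by nlinarith [hcube]
        nlinarith [mul_le_mul_of_nonneg_left h16 (show (0:ℝ) ≤ 5*(t^2+u) by positivity)]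
      have k2 : 8/((t^2+u)^2) ≤ 8/16 * (1/(t^2+u)) := by
        rw [mul_one_div, div_le_div_iff₀ (by positivity) (by positivity)]
        nlinarith [hdpos, sq_nonneg t]
      linarith
    have h3 : (0:ℝ) ≤ zWW u t := by unfold zWW; positivity
    have h1' : |zff u t| ≤ 1 * (1/(t^2+u)) := by rw [one_mul, one_div]; simpa [one_div] using h1
    have h4 : ‖zc u (2*(N:ℝ) - 1/2) M‖ ≤ 2 * (1/(t^2+u)) := by
      unfold zc
      rw [hgen, Real.norm_eq_abs]
      calc |zff u t + zWW u t| ≤ |zff u t| + |zWW u t| := abs_add_le _ _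
        _ ≤ 1 * (1/(t^2+u)) + 13/16 * (1/(t^2+u)) := by
            rw [abs_of_nonneg h3]; exact add_le_add h1' h2
        _ ≤ 2 * (1/(t^2+u)) := by
            have : (0:ℝ) ≤ 1/(t^2+u) := by positivity
            nlinarith [this]
    refine le_trans h4 ?_
    have h5 : ((M:ℝ)+1) ≤ t^2 + u := by nlinarith [sq_nonneg ((M:ℝ)-1), htM, hM0]
    have hM1 : (0:ℝ) < (M:ℝ)+1 := by linarith
    have h6 : 1/(t^2+u) ≤ 1/((M:ℝ)+1) := one_div_le_one_div_of_le hM1 h5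
    calc 2 * (1/(t^2+u)) ≤ 2 * (1/((M:ℝ)+1)) := by linarith
      _ = 2/((M:ℝ)+1) := by ring
  have hclim : Tendsto (zc u (2*(N:ℝ) - 1/2)) atTop (𝓝 0) := by
    apply squeeze_zero_norm hcbound
    have h := tendsto_one_div_add_atTop_nhds_zero_nat (𝕜 := ℝ)
    have h2 := h.const_mul (2:ℝ)
    simp only [mul_zero] at h2
    convert h2 using 2 with M
    ring
  have hsum_tail : Summable (fun k : ℕ => zff u (2*((k+N:ℕ):ℝ)+x) - zff u (2*((k+N:ℕ):ℝ)+1-x)) := by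
    have := (summable_nat_add_iff (f := fun n : ℕ => zff u (2*(n:ℝ)+x) - zff u (2*(n:ℝ)+1-x)) N).mpr hsum
    exact this
  have hlim1 := hsum_tail.hasSum.tendsto_sum_nat
  have hlim2 : Tendsto (fun M : ℕ => (1/2-x) * (zc u (2*(N:ℝ) - 1/2) 0 - zc u (2*(N:ℝ) - 1/2) M))
      atTop (𝓝 ((1/2-x) * (zc u (2*(N:ℝ) - 1/2) 0 - 0))) :=
    (tendsto_const_nhds.sub hclim).const_mul _
  have htail : (∑' k : ℕ, (zff u (2*((k+N:ℕ):ℝ)+x) - zff u (2*((k+N:ℕ):ℝ)+1-x)))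
      ≤ (1/2-x) * (zff u (2*(N:ℝ) - 1/2) + zWW u (2*(N:ℝ) - 1/2)) := by
    have := le_of_tendsto_of_tendsto' hlim1 hlim2 hps
    have hc0 : zc u (2*(N:ℝ) - 1/2) 0 = zff u (2*(N:ℝ) - 1/2) + zWW u (2*(N:ℝ) - 1/2) := by
      unfold zc; norm_num
    rw [hc0] at this
    simpa using this
  -- ==================== finite part ====================
  have hmid : ∀ n : ℕ, 2 ≤ n → n < N →
      zff u (2*(n:ℝ)+x) - zff u (2*(n:ℝ)+1-x) ≤ 0 := by
    intro n h2n hnN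
    have hn0 : (0:ℝ) ≤ (n:ℝ) := Nat.cast_nonneg n
    have hn1 : (n:ℝ) + 1 ≤ (N:ℝ) := by exact_mod_cast hnN
    have hb0 : (0:ℝ) ≤ 2*(n:ℝ)+1-x := by linarith
    have hbA : 2*(n:ℝ)+1-x ≤ 2*(N:ℝ) - 1/2 := by linarith
    have hb2 : (2*(n:ℝ)+1-x)^2 ≤ u :=
      le_trans (pow_le_pow_left₀ hb0 hbA 2) hA2u
    have ha0 : (0:ℝ) ≤ 2*(n:ℝ)+x := by linarith
    have hab : 2*(n:ℝ)+x ≤ 2*(n:ℝ)+1-x := by linarith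
    have ha2 : (2*(n:ℝ)+x)^2 ≤ (2*(n:ℝ)+1-x)^2 := pow_le_pow_left₀ ha0 hab 2
    have ha2u : (2*(n:ℝ)+x)^2 ≤ u := le_trans ha2 hb2
    have h := zff_sub_le hu0 ha2u hb2 ha2
      (le_refl (((2*(n:ℝ)+x)^2+u)^2 * ((2*(n:ℝ)+1-x)^2+u)^2))
    refine le_trans h ?_
    apply div_nonpos_of_nonpos_of_nonneg
    · nlinarith [ha2, sq_nonneg u]
    · positivity
  have hB0 : zff u x - zff u (1-x) ≤ ((1-x)^2 - x^2) * (-3*u^2) / (u+1)^4 := by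
    apply zff_sub_le hu0
    · nlinarith
    · nlinarith
    · nlinarith
    · have e1 : (x^2+u) ≤ u+1 := by nlinarith
      have e2 : ((1-x)^2+u) ≤ u+1 := by nlinarith
      calc (x^2+u)^2 * ((1-x)^2+u)^2 ≤ (u+1)^2 * (u+1)^2 := by
            apply mul_le_mul (pow_le_pow_left₀ (by positivity) e1 2)
              (pow_le_pow_left₀ (by positivity) e2 2) (by positivity) (by positivity)
        _ = (u+1)^4 := by ring
  have hB1 : zff u (2+x) - zff u (3-x) ≤
      ((3-x)^2 - (2+x)^2) * (-3*u^2) / ((u+25/4)^2*(u+9)^2) := by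
    apply zff_sub_le hu0
    · nlinarith
    · nlinarith
    · nlinarith
    · have e1 : ((2+x)^2+u) ≤ u+25/4 := by nlinarith
      have e2 : ((3-x)^2+u) ≤ u+9 := by nlinarith
      apply mul_le_mul (pow_le_pow_left₀ (by positivity) e1 2)
        (pow_le_pow_left₀ (by positivity) e2 2) (by positivity) (by positivity)
  have he0 : zff u (2*((0:ℕ):ℝ)+x) - zff u (2*((0:ℕ):ℝ)+1-x) = zff u x - zff u (1-x) := by
    norm_num
  have he1 : zff u (2*((1:ℕ):ℝ)+x) - zff u (2*((1:ℕ):ℝ)+1-x)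
      = zff u (2+x) - zff u (3-x) := by
    norm_num
  have hstep : ∀ M : ℕ, 2 ≤ M → M ≤ N →
      ∑ n ∈ Finset.range M, (zff u (2*(n:ℝ)+x) - zff u (2*(n:ℝ)+1-x)) ≤
        (zff u x - zff u (1-x)) + (zff u (2+x) - zff u (3-x)) := by
    intro M
    induction M with
    | zero => omega
    | succ m ih =>
      intro h2 hle
      rcases Nat.lt_or_ge m 2 with hm2 | hm2
      · have : m = 1 := by omega
        subst this
        rw [Finset.sum_range_succ, Finset.sum_range_one, he0, he1]
      · rw [Finset.sum_range_succ]
        have h1 := ih hm2 (by omega)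
        have h2' := hmid m hm2 (by omega)
        linarith
  have hfin : ∑ n ∈ Finset.range N, (zff u (2*(n:ℝ)+x) - zff u (2*(n:ℝ)+1-x)) ≤
      ((1-x)^2 - x^2) * (-3*u^2) / (u+1)^4
      + ((3-x)^2 - (2+x)^2) * (-3*u^2) / ((u+25/4)^2*(u+9)^2) := by
    have := hstep N hN2 le_rfl
    linarith [hB0, hB1]
  -- ==================== endpoint bounds ====================
  have hffA : zff u (2*(N:ℝ)-1/2) ≤ 0 := by
    unfold zff
    apply div_nonpos_of_nonpos_of_nonneg
    · linarith [hA2u]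
    · positivity
  have hWWA : zWW u (2*(N:ℝ)-1/2) ≤ 5*u^2/(u+49/4)^4 + 8/(u+49/4)^2 := by
    unfold zWW
    have hA2 : 49/4 ≤ (2*(N:ℝ)-1/2)^2 := by nlinarith [hN2R]
    have hd1 : u + 49/4 ≤ (2*(N:ℝ)-1/2)^2 + u := by linarith
    have hp1 : (0:ℝ) < u + 49/4 := by linarith
    have k1 : 5*u^2/(((2*(N:ℝ)-1/2)^2+u)^4) ≤ 5*u^2/(u+49/4)^4 := by
      rw [div_le_div_iff₀ (by positivity) (by positivity)]
      exact mul_le_mul_of_nonneg_left (pow_le_pow_left₀ hp1.le hd1 4) (by positivity)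
    have k2 : 8/(((2*(N:ℝ)-1/2)^2+u)^2) ≤ 8/(u+49/4)^2 := by
      rw [div_le_div_iff₀ (by positivity) (by positivity)]
      exact mul_le_mul_of_nonneg_left (pow_le_pow_left₀ hp1.le hd1 2) (by positivity)
    linarith
  -- ==================== assembly ====================
  rw [← hsum.sum_add_tsum_nat_add N]
  have htail2 : (∑' k : ℕ, (zff u (2*((k+N:ℕ):ℝ)+x) - zff u (2*((k+N:ℕ):ℝ)+1-x)))
      ≤ (1/2-x) * (5*u^2/(u+49/4)^4 + 8/(u+49/4)^2) := by
    refine le_trans htail ?_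
    have := add_le_add hffA hWWA
    have h0 : zff u (2*(N:ℝ)-1/2) + zWW u (2*(N:ℝ)-1/2)
        ≤ 5*u^2/(u+49/4)^4 + 8/(u+49/4)^2 := by linarith
    exact mul_le_mul_of_nonneg_left h0 hs0.le
  have hz := zfinal hu16
  have hgoal : ((1-x)^2 - x^2) * (-3*u^2) / (u+1)^4
      + ((3-x)^2 - (2+x)^2) * (-3*u^2) / ((u+25/4)^2*(u+9)^2)
      + (1/2-x) * (5*u^2/(u+49/4)^4 + 8/(u+49/4)^2) < 0 := by
    have e1 : ((1-x)^2 - x^2) * (-3*u^2) / (u+1)^4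
        = -(1-2*x) * (3*u^2/(u+1)^4) := by ring
    have e2 : ((3-x)^2 - (2+x)^2) * (-3*u^2) / ((u+25/4)^2*(u+9)^2)
        = -(1-2*x) * (15*u^2/((u+25/4)^2*(u+9)^2)) := by ring
    rw [e1, e2]
    nlinarith [mul_pos hs0 (sub_pos.mpr hz)]
  calc (∑ n ∈ Finset.range N, (zff u (2*(n:ℝ)+x) - zff u (2*(n:ℝ)+1-x)))
        + (∑' k : ℕ, (zff u (2*((k+N:ℕ):ℝ)+x) - zff u (2*((k+N:ℕ):ℝ)+1-x)))
      ≤ (((1-x)^2 - x^2) * (-3*u^2) / (u+1)^4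
        + ((3-x)^2 - (2+x)^2) * (-3*u^2) / ((u+25/4)^2*(u+9)^2))
        + (1/2-x) * (5*u^2/(u+49/4)^4 + 8/(u+49/4)^2) := add_le_add hfin htail2
    _ < 0 := by linarith [hgoal]

lemma zS_neg {y x : ℝ} (hy : 4 ≤ y) (hx0 : 0 < x) (hx : x < 1/2) :
    (∑' n : ℕ, (zff (y^2) (2*n+x) - zff (y^2) (2*n+1-x))) < 0 := by
  have hy0 : (0:ℝ) < y := by linarith
  have hu16 : (16:ℝ) ≤ y^2 := by nlinarith
  have hN2 : 2 ≤ ⌊y/2⌋₊ := Nat.le_floor (by push_cast; linarith)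
  have hNle : ((⌊y/2⌋₊ : ℕ):ℝ) ≤ y/2 := Nat.floor_le (by linarith)
  have hNgt : y/2 < ((⌊y/2⌋₊ : ℕ):ℝ) + 1 := Nat.lt_floor_add_one _
  have hN2R : (2:ℝ) ≤ ((⌊y/2⌋₊ : ℕ):ℝ) := by exact_mod_cast hN2
  apply zS_neg' (y^2) x ⌊y/2⌋₊ hu16 hx0 hx hN2
  · rcases lt_or_ge y 6 with h6 | h6
    · nlinarith [sq_nonneg (2*((⌊y/2⌋₊ : ℕ):ℝ) - 1/2 - 7/2), hN2R, h6, hy]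
    · have hA5 : y - 5/2 < 2*((⌊y/2⌋₊ : ℕ):ℝ) - 1/2 := by linarith
      have hpos : (0:ℝ) < y - 5/2 := by linarith
      have hsq : (y - 5/2)^2 < (2*((⌊y/2⌋₊ : ℕ):ℝ) - 1/2)^2 := by nlinarith
      nlinarith [sq_nonneg (y - 6)]
  · have h1 : 2*((⌊y/2⌋₊ : ℕ):ℝ) - 1/2 ≤ y - 1/2 := by linarith
    have h2 : (0:ℝ) ≤ 2*((⌊y/2⌋₊ : ℕ):ℝ) - 1/2 := by linarith
    nlinarith

theorem sum_eq_zero_iff_half (y x : ℝ) (hy : 4 ≤ y) (hx0 : 0 < x) (hx : x ≤ 1 / 2) :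
    (∑' n : ℕ, (((2 * n + x) ^ 2 - y ^ 2) / (((2 * n + x) ^ 2 + y ^ 2) ^ 2) -
        ((2 * n + 1 - x) ^ 2 - y ^ 2) / (((2 * n + 1 - x) ^ 2 + y ^ 2) ^ 2))) = 0 ↔
      x = 1 / 2 := by
  constructor
  · intro h
    by_contra hne
    have hxlt : x < 1/2 := lt_of_le_of_ne hx hne
    have hneg := zS_neg hy hx0 hxlt
    have heq : (∑' n : ℕ, (zff (y^2) (2*n+x) - zff (y^2) (2*n+1-x)))
        = (∑' n : ℕ, (((2 * n + x) ^ 2 - y ^ 2) / (((2 * n + x) ^ 2 + y ^ 2) ^ 2) -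
            ((2 * n + 1 - x) ^ 2 - y ^ 2) / (((2 * n + 1 - x) ^ 2 + y ^ 2) ^ 2))) := rfl
    rw [heq, h] at hneg
    exact lt_irrefl 0 hneg
  · intro h
    subst h
    have hz : ∀ n : ℕ, (((2 * (n:ℝ) + 1/2) ^ 2 - y ^ 2) / (((2 * n + 1/2) ^ 2 + y ^ 2) ^ 2) -
        ((2 * (n:ℝ) + 1 - 1/2) ^ 2 - y ^ 2) / (((2 * n + 1 - 1/2) ^ 2 + y ^ 2) ^ 2)) = 0 := by
      intro n
      have e : 2 * (n:ℝ) + 1 - 1/2 = 2 * (n:ℝ) + 1/2 := by ring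
      rw [e, sub_self]
    calc (∑' n : ℕ, (((2 * (n:ℝ) + 1/2) ^ 2 - y ^ 2) / (((2 * n + 1/2) ^ 2 + y ^ 2) ^ 2) -
            ((2 * (n:ℝ) + 1 - 1/2) ^ 2 - y ^ 2) / (((2 * n + 1 - 1/2) ^ 2 + y ^ 2) ^ 2)))
        = ∑' _ : ℕ, (0:ℝ) := tsum_congr hz
      _ = 0 := tsum_zero
end
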